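/- arXiv:1312.6953 — 8 statements merged into one kernel-verified Lean document; each statement's English description precedes it below -/
import Mathlib

section
/- Let A be a unital Banach algebra with unit 1, M a unital Banach left A-module, and δ: A → M a continuous linear map satisfying a·δ(a⁻¹) + a⁻¹·δ(a) = δ(1) for all a in the principal component Inv₀(A). Then δ is a Jordan left derivation, i.e., δ(a²) = 2a·δ(a) for all a ∈ A. -/
set_option linter.unusedSectionVars false
set_option maxHeartbeats 1000000

open NormedSpace

section Aux

variable {A M : Type*} [NormedRing A] [NormedAlgebra ℂ A] [CompleteSpace A]
    [NormedAddCommGroup M] [NormedSpace ℂ M] [CompleteSpace M]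
    [Module A M] [IsBoundedSMul A M] [IsScalarTower ℂ A M]

theorem my_smulComm (z : ℂ) (a : A) (m : M) : a • z • m = z • a • m := by
  have h1 : z • m = (z • (1:A)) • m := by rw [smul_assoc, one_smul]
  rw [h1, ← mul_smul, ← Algebra.algebraMap_eq_smul_one, ← Algebra.commutes z a,
    Algebra.algebraMap_eq_smul_one, mul_smul, smul_assoc, one_smul]

/-- smul as a continuous bilinear map -/
noncomputable def myB : A →L[ℂ] M →L[ℂ] M :=
  LinearMap.mkContinuous₂
    (LinearMap.mk₂ ℂ (· • ·) add_smul (fun z a m => by simp [smul_assoc])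
      smul_add (fun z a m => by simp [my_smulComm]))
    1 (fun a m => by simpa using _root_.norm_smul_le a m)

@[simp] theorem myB_apply (a : A) (m : M) : myB a m = a • m := rfl

theorem my_smul_hasDerivAt {u : ℂ → A} {v : ℂ → M} {u' : A} {v' : M} {z : ℂ}
    (hu : HasDerivAt u u' z) (hv : HasDerivAt v v' z) :
    HasDerivAt (fun w => u w • v w) (u z • v' + u' • v z) z := by
  simpa using (myB (M := M)).hasDerivAt_of_bilinear (fun _ => hu) (fun _ => hv)

/-- exponential as a unit -/
noncomputable def expU (b : A) : Aˣ where
  val := exp b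
  inv := exp (-b)
  val_inv := by
    letI : NormedAlgebra ℚ A := .restrictScalars ℚ ℂ A
    rw [← exp_add_of_commute ((Commute.refl b).neg_right)]
    simp [exp_zero]
  inv_val := by
    letI : NormedAlgebra ℚ A := .restrictScalars ℚ ℂ A
    rw [← exp_add_of_commute ((Commute.refl b).neg_left)]
    simp [exp_zero]

@[simp] theorem expU_coe (b : A) : ((expU b : Aˣ) : A) = exp b := rfl
@[simp] theorem expU_inv_coe (b : A) : (((expU b)⁻¹ : Aˣ) : A) = exp (-b) := rfl

theorem expU_mem (a : A) (z : ℂ) : expU (z • a) ∈ connectedComponent (1 : Aˣ) := by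
  have hc : Continuous (fun w : ℂ => expU (w • a)) := by
    apply Units.continuous_iff.2
    constructor
    · letI : NormedAlgebra ℚ A := .restrictScalars ℚ ℂ A
      exact exp_continuous.comp (by fun_prop)
    · simp only [expU_inv_coe]
      letI : NormedAlgebra ℚ A := .restrictScalars ℚ ℂ A
      exact exp_continuous.comp (by fun_prop)
  have hpre : IsPreconnected (Set.range (fun w : ℂ => expU (w • a))) := by
    rw [← Set.image_univ]
    exact isPreconnected_univ.image _ hc.continuousOn
  have h1 : (1 : Aˣ) ∈ Set.range (fun w : ℂ => expU (w • a)) := by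
    refine ⟨0, ?_⟩
    ext
    simp [exp_zero]
  exact hpre.subset_connectedComponent h1 ⟨z, rfl⟩

end Aux

/-- a continuous linear map `δ` satisfying
`a • δ a⁻¹ + a⁻¹ • δ a = δ 1` on the principal component of the invertible group
is a Jordan left derivation: `δ (a²) = 2 a • δ a`. -/
theorem stmt2 {A M : Type*} [NormedRing A] [NormedAlgebra ℂ A] [CompleteSpace A]
    [NormedAddCommGroup M] [NormedSpace ℂ M] [CompleteSpace M]
    [Module A M] [IsBoundedSMul A M] [IsScalarTower ℂ A M]
    (δ : A →L[ℂ] M)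
    (h : ∀ u : Aˣ, u ∈ connectedComponent (1 : Aˣ) →
      (u : A) • δ (↑u⁻¹ : A) + (↑u⁻¹ : A) • δ (u : A) = δ 1) :
    ∀ a : A, δ (a * a) = 2 • (a • δ a) := by
  have hδ1 : δ (1:A) = 0 := by
    have h1 := h 1 (mem_connectedComponent)
    simp only [inv_one, Units.val_one, one_smul] at h1
    have := left_eq_add.mp h1.symm
    exact this
  intro a
  set e : ℂ → A := fun z => exp (z • a) with he_def
  have he : ∀ z : ℂ, HasDerivAt e (e z * a) z := fun z => hasDerivAt_exp_smul_const a z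
  have hen : ∀ z : ℂ, HasDerivAt (fun w : ℂ => e (-w)) (-(e (-z) * a)) z := by
    intro z
    have := (he (-z)).scomp z (hasDerivAt_neg z)
    simpa [Function.comp_def] using this
  have hδc : ∀ {m : ℂ → A} {m' : A} {z : ℂ}, HasDerivAt m m' z →
      HasDerivAt (fun w => δ (m w)) (δ m') z :=
    fun hm => (δ.hasFDerivAt.comp_hasDerivAt _ hm)
  -- the function F is identically zero
  set F : ℂ → M := fun z => e z • δ (e (-z)) + e (-z) • δ (e z) with hF_def
  have hF : ∀ z, F z = 0 := by
    intro z
    have hu := h (expU (z • a)) (expU_mem a z)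
    simp only [expU_coe, expU_inv_coe, hδ1] at hu
    simp only [hF_def, he_def, neg_smul]
    exact hu
  -- first derivative of F
  set G : ℂ → M := fun z =>
    (e z • δ (-(e (-z) * a)) + (e z * a) • δ (e (-z))) +
    (e (-z) • δ (e z * a) + (-(e (-z) * a)) • δ (e z)) with hG_def
  have hFG : ∀ z, HasDerivAt F (G z) z := by
    intro z
    exact (my_smul_hasDerivAt (he z) (hδc (hen z))).add
      (my_smul_hasDerivAt (hen z) (hδc (he z)))
  have hG : ∀ z, G z = 0 := by
    intro z
    have hconst : HasDerivAt F 0 z := by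
      have : F = fun _ => 0 := funext hF
      rw [this]; exact hasDerivAt_const z 0
    exact (hFG z).unique hconst
  -- second derivative at 0
  have hm1 : HasDerivAt (fun w : ℂ => -(e (-w) * a)) (-(-(e (-0) * a) * a)) 0 :=
    ((hen 0).mul_const a).neg
  have hm2 : HasDerivAt (fun w : ℂ => e w * a) ((e 0 * a) * a) 0 :=
    (he 0).mul_const a
  have hGd : HasDerivAt G
      (((e 0 • δ (-(-(e (-0) * a) * a)) + (e 0 * a) • δ (-(e (-0) * a))) +
        ((e 0 * a) • δ (-(e (-0) * a)) + ((e 0 * a) * a) • δ (e (-0)))) +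
       ((e (-0) • δ ((e 0 * a) * a) + (-(e (-0) * a)) • δ (e 0 * a)) +
        ((-(e (-0) * a)) • δ (e 0 * a) + (-(-(e (-0) * a) * a)) • δ (e 0)))) 0 := by
    exact ((my_smul_hasDerivAt (he 0) (hδc hm1)).add
        (my_smul_hasDerivAt hm2 (hδc (hen 0)))).add
      ((my_smul_hasDerivAt (hen 0) (hδc hm2)).add
        (my_smul_hasDerivAt hm1 (hδc (he 0))))
  have hGconst : HasDerivAt G 0 0 := by
    have : G = fun _ => 0 := funext hG
    rw [this]; exact hasDerivAt_const 0 0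
  have E := hGd.unique hGconst
  have he0 : e 0 = 1 := by simp [he_def, exp_zero]
  have hen0 : e (-0) = 1 := by simp [he_def, exp_zero]
  rw [he0, hen0] at E
  simp only [one_mul, one_smul, map_neg, smul_neg, neg_neg, hδ1, smul_zero, map_mul] at E
  simp only [neg_mul, map_neg, neg_neg, neg_smul, add_zero] at E
  set m := a • δ a with hm
  clear_value m
  have h2 : (2:ℂ) • δ (a * a) = (2:ℂ) • (2 • m) := by
    linear_combination (norm := module) E
  exact smul_right_injective M two_ne_zero h2
end

section
/- Let A be a unital Banach algebra with unit 1, M a unital Banach left A-module, and δ: A → M a continuous linear map such that for all a, b ∈ A with ab + ba = 1 one has 2a·δ(b) + 2b·δ(a) = δ(1). Then δ is a Jordan left derivation: δ(a²) = 2a·δ(a) for all a ∈ A. -/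
/-- a continuous linear map `δ` such that `a*b + b*a = 1` implies
`2 a • δ b + 2 b • δ a = δ 1` is a Jordan left derivation. -/
theorem stmt3 {A M : Type*} [NormedRing A] [NormedAlgebra ℂ A] [CompleteSpace A]
    [NormedAddCommGroup M] [NormedSpace ℂ M] [CompleteSpace M]
    [Module A M] [IsBoundedSMul A M] [IsScalarTower ℂ A M]
    (δ : A →L[ℂ] M)
    (h : ∀ a b : A, a * b + b * a = 1 → 2 • (a • δ b) + 2 • (b • δ a) = δ 1) :
    ∀ a : A, δ (a * a) = 2 • (a • δ a) := by
  have scomm : ∀ (c : ℂ) (x : A) (m : M), x • (c • m) = c • (x • m) := by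
    intro c x m
    rw [← smul_one_smul A c m, ← mul_smul, mul_smul_comm, mul_one, smul_assoc]
  have key0 : ∀ u : Aˣ, (u : A) • δ ↑u⁻¹ + (↑u⁻¹ : A) • δ ↑u = δ 1 := by
    intro u
    have hc := h u ((2:ℂ)⁻¹ • ↑u⁻¹) ?_
    · have e1 : (u : A) • δ ((2:ℂ)⁻¹ • ↑u⁻¹) = (2:ℂ)⁻¹ • ((u:A) • δ ↑u⁻¹) := by
        rw [map_smul, scomm]
      have e2 : ((2:ℂ)⁻¹ • (↑u⁻¹ : A)) • δ ↑u = (2:ℂ)⁻¹ • ((↑u⁻¹ : A) • δ ↑u) := by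
        rw [smul_assoc]
      rw [e1, e2] at hc
      rw [← hc]
      generalize (u : A) • δ ↑u⁻¹ = X
      generalize (↑u⁻¹ : A) • δ ↑u = Y
      module
    · rw [mul_smul_comm, smul_mul_assoc, Units.mul_inv, Units.inv_mul, ← smul_add,
        ← two_smul ℂ, smul_smul]
      norm_num
  have hδ1 : δ 1 = 0 := by
    have h1 := key0 1
    simp only [inv_one, Units.val_one, one_smul] at h1
    exact add_eq_left.mp h1
  have key : ∀ u : Aˣ, (u : A) • δ ↑u⁻¹ + (↑u⁻¹ : A) • δ ↑u = 0 := by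
    intro u; rw [key0 u, hδ1]
  -- pointwise identity for large n
  intro a
  set v : ℕ → A := fun n => Ring.inverse (1 + ((n:ℂ))⁻¹ • a) with hv
  have E : ∀ᶠ n : ℕ in Filter.atTop,
      δ (a * (a * v n)) = a • δ (a * v n) + (a * v n) • δ a := by
    rw [Filter.eventually_atTop]
    refine ⟨⌈‖a‖⌉₊ + 1, fun n hn => ?_⟩
    have hn0 : 0 < n := lt_of_lt_of_le (Nat.succ_pos _) hn
    have hna : ‖a‖ < n := by
      calc ‖a‖ ≤ ⌈‖a‖⌉₊ := Nat.le_ceil _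
      _ < n := by exact_mod_cast hn
    set t : ℂ := ((n:ℂ))⁻¹ with ht
    have htne : t ≠ 0 := by
      simp [ht, Nat.cast_ne_zero]; omega
    have hnorm : ‖-(t • a)‖ < 1 := by
      rw [norm_neg, norm_smul, ht, norm_inv]
      have h1 : ‖((n:ℂ))‖ = (n:ℝ) := by
        simp
      rw [h1, inv_mul_lt_one₀]
      · exact hna
      · exact_mod_cast hn0
    set u : Aˣ := Units.oneSub (-(t • a)) hnorm with hu
    have huval : (u : A) = 1 + t • a := by
      simp [hu, Units.oneSub, sub_neg_eq_add]
    have hVval : (↑u⁻¹ : A) = v n := by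
      rw [← Ring.inverse_unit u, huval]
    set V : A := (↑u⁻¹ : A) with hV
    set w : A := a * V with hw
    have hVw : V = 1 - t • w := by
      have h1 : (u : A) * V = 1 := u.mul_inv
      rw [huval, add_mul, one_mul, smul_mul_assoc] at h1
      rw [hw]
      linear_combination (norm := abel1) h1
    have hδu : δ (u : A) = t • δ a := by
      rw [huval, map_add, map_smul, hδ1, zero_add]
    have hδV : δ V = -(t • δ w) := by
      rw [hVw, map_sub, map_smul, hδ1, zero_sub]
    have hk := key u
    rw [← hV, hδV, hδu, hVw, huval, smul_neg] at hk
    simp only [scomm] at hk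
    rw [neg_add_eq_zero] at hk
    -- hk : t • ((1 + t • a) • δ w) = t • ((1 - t • w) • δ a)
    have hk3 := smul_right_injective M htne hk
    rw [add_smul, sub_smul, one_smul, one_smul, smul_assoc, smul_assoc] at hk3
    -- hk3 : δ w + t • (a • δ w) = δ a - t • (w • δ a)
    have hk4 : t • (a • δ w + w • δ a) = δ a - δ w := by
      rw [smul_add]
      rw [eq_sub_iff_add_eq] at hk3 ⊢
      exact (by abel : t • (a • δ w) + t • (w • δ a) + δ w
        = δ w + t • (a • δ w) + t • (w • δ a)).trans hk3
    have haw : t • (a * w) = a - w := by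
      have h2 : a - w = a * (1 - V) := by rw [mul_sub, mul_one, hw]
      rw [h2, hVw, sub_sub_cancel, mul_smul_comm]
    have hk5 : t • δ (a * w) = δ a - δ w := by
      rw [← map_smul, haw, map_sub]
    have hfin := smul_right_injective M htne (hk5.trans hk4.symm)
    rw [hw, hVval] at hfin
    exact hfin
  -- limits
  have hts : Filter.Tendsto (fun n : ℕ => ((n:ℂ))⁻¹) Filter.atTop (nhds 0) := by
    have h1 : Filter.Tendsto (fun n : ℕ => ((n:ℝ))⁻¹) Filter.atTop (nhds 0) :=
      tendsto_inv_atTop_zero.comp tendsto_natCast_atTop_atTop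
    have h2 := (Complex.continuous_ofReal.tendsto 0).comp h1
    simpa [Function.comp_def] using h2
  have hU : Filter.Tendsto (fun n : ℕ => 1 + ((n:ℂ))⁻¹ • a) Filter.atTop (nhds (1:A)) := by
    have h2 : Filter.Tendsto (fun n : ℕ => ((n:ℂ))⁻¹ • a) Filter.atTop (nhds (0:A)) := by
      simpa using hts.smul_const a
    have h1 : Filter.Tendsto (fun _ : ℕ => (1:A)) Filter.atTop (nhds (1:A)) :=
      tendsto_const_nhds
    simpa using h1.add h2
  have hVt : Filter.Tendsto v Filter.atTop (nhds (1:A)) := by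
    have hc : ContinuousAt (Ring.inverse : A → A) ((1:Aˣ) : A) :=
      NormedRing.inverse_continuousAt (1:Aˣ)
    rw [Units.val_one] at hc
    have h3 := hc.tendsto.comp hU
    simp only [Function.comp_def] at h3
    rw [Ring.inverse_one] at h3
    exact h3
  have hca : Filter.Tendsto (fun _ : ℕ => a) Filter.atTop (nhds a) := tendsto_const_nhds
  have hwt : Filter.Tendsto (fun n => a * v n) Filter.atTop (nhds a) := by
    simpa using hca.mul hVt
  have hL : Filter.Tendsto (fun n => δ (a * (a * v n))) Filter.atTop (nhds (δ (a * a))) :=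
    (δ.continuous.tendsto _).comp (hca.mul hwt)
  have hR : Filter.Tendsto (fun n => a • δ (a * v n) + (a * v n) • δ a)
      Filter.atTop (nhds (a • δ a + a • δ a)) :=
    (hca.smul ((δ.continuous.tendsto a).comp hwt)).add (hwt.smul tendsto_const_nhds)
  have hfin := tendsto_nhds_unique (hL.congr' E) hR
  rw [hfin, two_smul]
end

section
/- Let A be a unital Banach algebra with unit 1, M a unital Banach left A-module, and x, y central elements of A with x + y = 1. Suppose δ: A → M is a continuous linear map such that (i) ab + ba = x implies 2a·δ(b) + 2b·δ(a) = δ(x) and (ii) ab + ba = y implies 2a·δ(b) + 2b·δ(a) = δ(y), for all a, b ∈ A. Then δ is a Jordan left derivation. -/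
open Filter Topology

/-- if `x, y` are central with `x + y = 1` and `δ` behaves like a Jordan
left derivation at Jordan products equal to `x` and to `y`, then `δ` is a Jordan left
derivation. -/
theorem stmt4 {A M : Type*} [NormedRing A] [NormedAlgebra ℂ A] [CompleteSpace A]
    [NormedAddCommGroup M] [NormedSpace ℂ M] [CompleteSpace M]
    [Module A M] [IsBoundedSMul A M] [IsScalarTower ℂ A M]
    (δ : A →L[ℂ] M) (x y : A)
    (hx : x ∈ Set.center A) (hy : y ∈ Set.center A) (hxy : x + y = 1)
    (h1 : ∀ a b : A, a * b + b * a = x → 2 • (a • δ b) + 2 • (b • δ a) = δ x)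
    (h2 : ∀ a b : A, a * b + b * a = y → 2 • (a • δ b) + 2 • (b • δ a) = δ y) :
    ∀ a : A, δ (a * a) = 2 • (a • δ a) := by
  have e2 : ∀ m : M, (2 • ((2:ℂ)⁻¹ • m) : M) = m := by
    intro m
    rw [← Nat.cast_smul_eq_nsmul ℂ, smul_smul]
    norm_num
  have half : ∀ z : A, ((2:ℂ)⁻¹ • z) + ((2:ℂ)⁻¹ • z) = z := by
    intro z
    rw [← two_smul ℂ, smul_smul]
    norm_num
  -- Step 1 : δ 1 = 0
  have hx0 : x • δ 1 = 0 := by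
    have hb : (1:A) * ((2:ℂ)⁻¹ • x) + ((2:ℂ)⁻¹ • x) * 1 = x := by
      rw [one_mul, mul_one]; exact half x
    have h := h1 1 ((2:ℂ)⁻¹ • x) hb
    rw [one_smul, map_smul, smul_assoc, e2, e2] at h
    exact (add_eq_left).mp h
  have hy0 : y • δ 1 = 0 := by
    have hb : (1:A) * ((2:ℂ)⁻¹ • y) + ((2:ℂ)⁻¹ • y) * 1 = y := by
      rw [one_mul, mul_one]; exact half y
    have h := h2 1 ((2:ℂ)⁻¹ • y) hb
    rw [one_smul, map_smul, smul_assoc, e2, e2] at h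
    exact (add_eq_left).mp h
  have hδ1 : δ (1:A) = 0 := by
    have : (x + y) • δ (1:A) = 0 := by rw [add_smul, hx0, hy0, add_zero]
    rwa [hxy, one_smul] at this
  -- Step 2 : key identity for units
  have key : ∀ u : Aˣ, (u : A) • δ (↑u⁻¹ : A) + (↑u⁻¹ : A) • δ (u : A) = 0 := by
    intro u
    have hbx : (u : A) * ((2:ℂ)⁻¹ • ((↑u⁻¹ : A) * x)) + ((2:ℂ)⁻¹ • ((↑u⁻¹ : A) * x)) * u = x := by
      rw [mul_smul_comm, smul_mul_assoc, ← mul_assoc, Units.mul_inv, one_mul,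
        mul_assoc, hx.comm u, ← mul_assoc, Units.inv_mul, one_mul]
      exact half x
    have hby : (u : A) * ((2:ℂ)⁻¹ • ((↑u⁻¹ : A) * y)) + ((2:ℂ)⁻¹ • ((↑u⁻¹ : A) * y)) * u = y := by
      rw [mul_smul_comm, smul_mul_assoc, ← mul_assoc, Units.mul_inv, one_mul,
        mul_assoc, hy.comm u, ← mul_assoc, Units.inv_mul, one_mul]
      exact half y
    have hux := h1 u ((2:ℂ)⁻¹ • ((↑u⁻¹ : A) * x)) hbx
    have huy := h2 u ((2:ℂ)⁻¹ • ((↑u⁻¹ : A) * y)) hby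
    rw [map_smul, smul_comm, e2, smul_assoc, e2] at hux huy
    have hsum := congrArg₂ (· + ·) hux huy
    simp only [← map_add, ← add_smul] at hsum
    have hterm : ((↑u⁻¹ : A) * x) • δ (↑u : A) + ((↑u⁻¹ : A) * y) • δ (↑u : A)
        = (↑u⁻¹ : A) • δ (↑u : A) := by
      rw [← add_smul, ← mul_add, hxy, mul_one]
    have hterm2 : (↑u : A) • δ ((↑u⁻¹ : A) * x) + (↑u : A) • δ ((↑u⁻¹ : A) * y)
        = (↑u : A) • δ (↑u⁻¹ : A) := by
      rw [← smul_add, ← map_add, ← mul_add, hxy, mul_one]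
    rw [add_add_add_comm, hterm, hterm2, hxy, hδ1] at hsum
    exact hsum
  intro a
  -- the functions
  set R : ℂ → A := fun t => Ring.inverse (1 - t • a) with hR
  set F : ℂ → M := fun t => δ (a * a * R t) with hF
  set G : ℂ → M := fun t =>
    (a * R t) • δ a + (a * R t) • δ a + t • (((a * R t) * (a * R t)) • δ a) with hG
  have hRcont : ContinuousAt R 0 := by
    have hc1 : ContinuousAt (fun t : ℂ => 1 - t • a) 0 := by fun_prop
    have hc2 : ContinuousAt (Ring.inverse : A → A) ((fun t : ℂ => 1 - t • a) 0) := by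
      simpa using NormedRing.inverse_continuousAt (1 : Aˣ)
    have : ContinuousAt ((Ring.inverse : A → A) ∘ fun t : ℂ => 1 - t • a) 0 :=
      ContinuousAt.comp hc2 hc1
    exact this
  have hR0 : R 0 = 1 := by simp [hR]
  have hball : ∀ᶠ t in 𝓝 (0:ℂ), ‖t • a‖ < 1 := by
    have hc : ContinuousAt (fun t : ℂ => ‖t • a‖) 0 := by fun_prop
    have hc' := hc.tendsto
    simp only [zero_smul, norm_zero] at hc'
    exact hc'.eventually_lt_const one_pos
  have hev : F =ᶠ[𝓝[≠] (0:ℂ)] G := by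
    filter_upwards [hball.filter_mono nhdsWithin_le_nhds, self_mem_nhdsWithin] with t hlt ht0
    have ht0' : t ≠ 0 := ht0
    obtain ⟨u, hu⟩ := isUnit_one_sub_of_norm_lt_one hlt
    have hrinv : R t = (↑u⁻¹ : A) := by
      rw [hR]; simp only []
      rw [← hu, Ring.inverse_unit]
    have hmul1 : (1 - t • a) * R t = 1 := by rw [hrinv, ← hu, Units.mul_inv]
    have hmul2 : R t * (1 - t • a) = 1 := by rw [hrinv, ← hu, Units.inv_mul]
    have hδu : δ (1 - t • a) = -(t • δ a) := by
      rw [map_sub, map_smul, hδ1, zero_sub]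
    have hkey : (1 - t • a) • δ (R t) + (R t) • δ (1 - t • a) = 0 := by
      have := key u
      rwa [hu, ← hrinv] at this
    have h5 : (1 - t • a) • δ (R t) = t • (R t • δ a) := by
      rw [hδu, smul_neg, smul_comm] at hkey
      linear_combination (norm := abel) hkey
    have h6 : δ (R t) = t • ((R t * R t) • δ a) := by
      calc δ (R t) = (R t * (1 - t • a)) • δ (R t) := by rw [hmul2, one_smul]
        _ = R t • ((1 - t • a) • δ (R t)) := by rw [mul_smul]
        _ = R t • (t • (R t • δ a)) := by rw [h5]
        _ = t • (R t • (R t • δ a)) := smul_comm _ _ _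
        _ = t • ((R t * R t) • δ a) := by rw [mul_smul]
    have h7 : R t = 1 + t • (a * R t) := by
      have h := hmul1
      rw [sub_mul, one_mul, smul_mul_assoc, sub_eq_iff_eq_add] at h
      exact h
    have h8 : δ (R t) = t • δ (a * R t) := by
      conv_lhs => rw [h7]
      rw [map_add, map_smul, hδ1, zero_add]
    have h9 : δ (a * R t) = (R t * R t) • δ a := by
      apply smul_right_injective M ht0'
      show t • δ (a * R t) = t • ((R t * R t) • δ a)
      rw [← h8, h6]
    have h10 : a * R t = a + t • (a * a * R t) := by
      conv_lhs => rw [h7]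
      rw [mul_add, mul_one, mul_smul_comm, ← mul_assoc]
    have h11 : δ (a * R t) = δ a + t • δ (a * a * R t) := by
      rw [h10, map_add, map_smul]
    have h12 : (R t * R t) • δ a
        = δ a + t • ((a * R t) • δ a + (a * R t) • δ a + t • (((a * R t) * (a * R t)) • δ a)) := by
      have hsq : R t * R t = 1 + t • (a * R t) + t • (a * R t) + (t * t) • ((a * R t) * (a * R t)) := by
        conv_lhs => rw [h7]
        rw [add_mul, one_mul, mul_add, mul_one, smul_mul_smul_comm]
        rw [h7]
        abel
      rw [hsq, add_smul, add_smul, add_smul, one_smul, smul_assoc, smul_assoc]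
      conv_rhs => rw [smul_add, smul_add, smul_smul]
      abel
    have hmain : t • δ (a * a * R t) = t • G t := by
      have := h9
      rw [h11, h12] at this
      exact add_left_cancel this
    have hfin := smul_right_injective M ht0' hmain
    simpa only [hF] using hfin
  -- limits
  have hFc : ContinuousAt F 0 := by
    apply δ.continuous.continuousAt.comp
    exact (continuousAt_const.mul hRcont)
  have hGc : ContinuousAt G 0 := by
    have hm : ContinuousAt (fun t : ℂ => a * R t) 0 := continuousAt_const.mul hRcont
    apply ContinuousAt.add
    apply ContinuousAt.add
    · exact hm.smul continuousAt_const
    · exact hm.smul continuousAt_const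
    · exact continuousAt_id.smul ((hm.mul hm).smul continuousAt_const)
  have lF : Tendsto F (𝓝[≠] (0:ℂ)) (𝓝 (F 0)) := hFc.tendsto.mono_left nhdsWithin_le_nhds
  have lG : Tendsto G (𝓝[≠] (0:ℂ)) (𝓝 (G 0)) := hGc.tendsto.mono_left nhdsWithin_le_nhds
  have heq : F 0 = G 0 := tendsto_nhds_unique (lF.congr' hev) lG
  have hF0 : F 0 = δ (a * a) := by rw [hF]; simp [hR0]
  have hG0 : G 0 = a • δ a + a • δ a := by rw [hG]; simp [hR0]
  rw [← hF0, heq, hG0, two_smul]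
end

section
/- Let A be a unital Banach algebra containing a nontrivial idempotent P such that (1−P)·A·P = {0}. Let δ: A → A be a continuous linear map such that for all a, b ∈ A with ab + ba = P one has 2a·δ(b) + 2b·δ(a) = δ(P). Then (1−P)·δ(a₁₁)·(1−P) = 0 for every a₁₁ in the corner subalgebra P·A·P. -/
/-- Key lemma: if `x` lies in the corner `P A P` and is invertible there (with inverse `y`),
then `(1-P) * δ x = 0`. -/
lemma stmt7_key {A : Type*} [NormedRing A] [NormedAlgebra ℂ A] [CompleteSpace A]
    (P : A) (hP : P * P = P)
    (δ : A →L[ℂ] A)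
    (h : ∀ a b : A, a * b + b * a = P → 2 * (a * δ b) + 2 * (b * δ a) = δ P)
    (x y : A) (hx : P * x * P = x) (hxy : x * y = P) (hyx : y * x = P) :
    (1 - P) * δ x = 0 := by
  have hPx : P * x = x := by
    conv_lhs => rw [← hx]
    rw [← mul_assoc, ← mul_assoc, hP, hx]
  have hxP : x * P = x := by
    conv_lhs => rw [← hx]
    rw [mul_assoc, hP, hx]
  have hx1 : x * (1 - P) = 0 := by rw [mul_sub, mul_one, hxP, sub_self]
  have h1x : (1 - P) * x = 0 := by rw [sub_mul, one_mul, hPx, sub_self]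
  have h1P : (1 - P) * (1 - P) = 1 - P := by
    have e : (1 - P) * (1 - P) = 1 - P - P + P * P := by noncomm_ring
    rw [e, hP]; abel
  have e1 : x * ((2:ℂ)⁻¹ • y) + ((2:ℂ)⁻¹ • y) * x = P := by
    rw [mul_smul_comm, smul_mul_assoc, hxy, hyx, ← smul_add, ← two_smul ℂ P, smul_smul]
    norm_num
  have e2 : x * ((2:ℂ)⁻¹ • y + (1 - P)) + ((2:ℂ)⁻¹ • y + (1 - P)) * x = P := by
    rw [mul_add, add_mul, hx1, h1x, add_zero, add_zero]
    exact e1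
  have H1 := h x ((2:ℂ)⁻¹ • y) e1
  have H2 := h x ((2:ℂ)⁻¹ • y + (1 - P)) e2
  rw [map_add] at H2
  have key2 : 2 * (x * δ (1 - P)) + 2 * ((1 - P) * δ x) = 0 := by
    have hd : (2 * (x * (δ ((2:ℂ)⁻¹ • y) + δ (1 - P))) +
          2 * (((2:ℂ)⁻¹ • y + (1 - P)) * δ x)) -
        (2 * (x * δ ((2:ℂ)⁻¹ • y)) + 2 * (((2:ℂ)⁻¹ • y) * δ x)) = 0 := by
      rw [H2, H1, sub_self]
    calc 2 * (x * δ (1 - P)) + 2 * ((1 - P) * δ x)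
        = (2 * (x * (δ ((2:ℂ)⁻¹ • y) + δ (1 - P))) +
            2 * (((2:ℂ)⁻¹ • y + (1 - P)) * δ x)) -
          (2 * (x * δ ((2:ℂ)⁻¹ • y)) + 2 * (((2:ℂ)⁻¹ • y) * δ x)) := by noncomm_ring
      _ = 0 := hd
  have h2 : (2:A) * ((1 - P) * δ x) = 0 := by
    have e : (2:A) * ((1 - P) * δ x) =
        (1 - P) * (2 * (x * δ (1 - P)) + 2 * ((1 - P) * δ x)) -
          ((1 - P) * x) * (2 * δ (1 - P)) -
          ((1 - P) * (1 - P) - (1 - P)) * (2 * δ x) := by noncomm_ring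
    rw [e, key2, h1x, h1P, sub_self, mul_zero, zero_mul, zero_mul, sub_zero, sub_zero]
  have h2' : (2:ℂ) • ((1 - P) * δ x) = 0 := by
    rw [two_smul, ← two_mul]; exact h2
  have := congrArg (fun z => (2:ℂ)⁻¹ • z) h2'
  simpa [smul_smul] using this

/-- if `P` is a nontrivial idempotent with `(1-P) A P = 0` and `δ` behaves
like a Jordan left derivation at `P`-Jordan products, then
`(1-P) δ(a₁₁) (1-P) = 0` for every `a₁₁` in the corner `P A P`. -/
theorem stmt7 {A : Type*} [NormedRing A] [NormedAlgebra ℂ A] [CompleteSpace A]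
    (P : A) (hP : P * P = P) (hP0 : P ≠ 0) (hP1 : P ≠ 1)
    (hq : ∀ a : A, (1 - P) * a * P = 0)
    (δ : A →L[ℂ] A)
    (h : ∀ a b : A, a * b + b * a = P → 2 * (a * δ b) + 2 * (b * δ a) = δ P) :
    ∀ a : A, (1 - P) * δ (P * a * P) * (1 - P) = 0 := by
  intro a
  set x := P * a * P with hxdef
  have hx : P * x * P = x := by
    have e : P * (P * a * P) * P = (P * P) * a * (P * P) := by noncomm_ring
    rw [hxdef, e, hP]
  have hPx : P * x = x := by
    conv_lhs => rw [← hx]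
    rw [← mul_assoc, ← mul_assoc, hP, hx]
  have hxP : x * P = x := by
    conv_lhs => rw [← hx]
    rw [mul_assoc, hP, hx]
  -- the scalar
  set c : ℂ := ((‖x‖ + 1 : ℝ) : ℂ) with hcdef
  have hcpos : (0:ℝ) < ‖x‖ + 1 := by positivity
  have hc0 : c ≠ 0 := by
    simp only [hcdef, ne_eq, Complex.ofReal_eq_zero]
    exact ne_of_gt hcpos
  have hcnorm : ‖c‖ = ‖x‖ + 1 := by
    rw [hcdef, Complex.norm_real, Real.norm_of_nonneg hcpos.le]
  have ht : ‖-(c⁻¹ • x)‖ < 1 := by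
    rw [norm_neg, norm_smul, norm_inv, hcnorm]
    rw [inv_mul_lt_iff₀ hcpos, mul_one]
    linarith
  set U : Aˣ := Units.oneSub (-(c⁻¹ • x)) ht with hUdef
  have hUval : (U : A) = 1 + c⁻¹ • x := by
    rw [hUdef, Units.val_oneSub, sub_neg_eq_add]
  set w0 : A := ((U⁻¹ : Aˣ) : A) with hw0
  have hU1 : (U : A) * w0 = 1 := U.mul_inv
  have hU2 : w0 * (U : A) = 1 := U.inv_mul
  set v : A := c • (1:A) + x with hvdef
  have hvU : v = c • (U : A) := by
    rw [hvdef, hUval, smul_add, smul_smul, mul_inv_cancel₀ hc0, one_smul]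
  set w : A := c⁻¹ • w0 with hwdef
  have hvw : v * w = 1 := by
    rw [hvU, hwdef, smul_mul_smul_comm, mul_inv_cancel₀ hc0, hU1, one_smul]
  have hwv : w * v = 1 := by
    rw [hvU, hwdef, smul_mul_smul_comm, inv_mul_cancel₀ hc0, hU2, one_smul]
  set u : A := c • P + x with hudef
  have huP : u * P = u := by
    rw [hudef, add_mul, smul_mul_assoc, hP, hxP]
  have hPu : P * u = u := by
    rw [hudef, mul_add, mul_smul_comm, hP, hPx]
  have huPv : u = P * v := by
    rw [hudef, hvdef, mul_add, mul_smul_comm, mul_one, hPx]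
  have huvP : u = v * P := by
    rw [hudef, hvdef, add_mul, smul_mul_assoc, one_mul, hxP]
  set y : A := P * w * P with hydef
  have huy : u * y = P := by
    calc u * y = (u * P) * w * P := by rw [hydef]; noncomm_ring
      _ = (P * v * w) * P := by rw [huP, huPv]
      _ = P * P := by rw [mul_assoc P v w, hvw, mul_one]
      _ = P := hP
  have hyu : y * u = P := by
    calc y * u = P * w * (P * u) := by rw [hydef]; noncomm_ring
      _ = P * (w * (v * P)) := by rw [hPu, huvP, mul_assoc]
      _ = P * P := by rw [← mul_assoc w v P, hwv, one_mul]
      _ = P := hP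
  have huc : P * u * P = u := by rw [hPu, huP]
  have hdu : (1 - P) * δ u = 0 := stmt7_key P hP δ h u y huc huy hyu
  have hdP : (1 - P) * δ P = 0 := by
    refine stmt7_key P hP δ h P P ?_ hP hP
    rw [hP, hP]
  have hdx : (1 - P) * δ x = 0 := by
    have e : δ u = c • δ P + δ x := by rw [hudef, map_add, map_smul]
    have := hdu
    rw [e, mul_add, mul_smul_comm, hdP, smul_zero, zero_add] at this
    exact this
  rw [hdx, zero_mul]
end

section
/- Let A be a unital Banach algebra containing a nontrivial idempotent P with (1−P)·A·P = {0}, and let δ: A → A be a continuous linear map such that ab + ba = P implies 2a·δ(b) + 2b·δ(a) = δ(P) for all a, b ∈ A. Then P·δ(a₂₂)·P = 0 and P·δ(a₂₂)·(1−P) = 0 for every a₂₂ in (1−P)·A·(1−P). -/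
/-- with `P` a nontrivial idempotent, `(1-P) A P = 0` and `δ` behaving like a
Jordan left derivation at `P`-Jordan products, `P δ(a₂₂) P = 0` and `P δ(a₂₂) (1-P) = 0`
for every `a₂₂` in `(1-P) A (1-P)`. -/
theorem stmt8 {A : Type*} [NormedRing A] [NormedAlgebra ℂ A] [CompleteSpace A]
    (P : A) (hP : P * P = P) (hP0 : P ≠ 0) (hP1 : P ≠ 1)
    (hq : ∀ a : A, (1 - P) * a * P = 0)
    (δ : A →L[ℂ] A)
    (h : ∀ a b : A, a * b + b * a = P → 2 * (a * δ b) + 2 * (b * δ a) = δ P) :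
    ∀ a : A, P * δ ((1 - P) * a * (1 - P)) * P = 0 ∧
      P * δ ((1 - P) * a * (1 - P)) * (1 - P) = 0 := by
  intro a
  set x : A := (1 - P) * a * (1 - P) with hx
  have hPq : P * (1 - P) = 0 := by rw [mul_sub, mul_one, hP, sub_self]
  have hqP : (1 - P) * P = 0 := by rw [sub_mul, one_mul, hP, sub_self]
  have hPx : P * x = 0 := by rw [hx, ← mul_assoc, ← mul_assoc, hPq, zero_mul, zero_mul]
  have hxP : x * P = 0 := by rw [hx, mul_assoc, hqP, mul_zero]
  set c : ℂ := 2⁻¹ with hc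
  set w : A := c • P with hw
  have hb2 : P * w + w * P = P := by
    rw [hw, mul_smul_comm, smul_mul_assoc, hP, ← add_smul]
    norm_num [hc]
  have hb1 : P * (w + x) + (w + x) * P = P := by
    rw [mul_add, add_mul, hPx, hxP, add_zero, add_zero]; exact hb2
  have e1 := h P (w + x) hb1
  have e2 := h P w hb2
  rw [map_add] at e1
  have e3 : 2 * (P * δ x) + 2 * (x * δ P) = 0 := by
    have e := e1.trans e2.symm
    have e4 : 2 * (P * δ x) + 2 * (x * δ P) =
        (2 * (P * (δ w + δ x)) + 2 * ((w + x) * δ P)) -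
          (2 * (P * δ w) + 2 * (w * δ P)) := by noncomm_ring
    rw [e4, e, sub_self]
  rw [two_mul, two_mul] at e3
  have e5 := congrArg (fun z => P * z) e3
  simp only [mul_add, ← mul_assoc, hP, hPx, zero_mul, add_zero, mul_zero] at e5
  have e6 : P * δ x = 0 := by
    have : (2 : ℂ) • (P * δ x) = 0 := by rw [two_smul]; exact e5
    simpa using (smul_eq_zero.mp this).resolve_left (by norm_num)
  exact ⟨by rw [e6, zero_mul], by rw [e6, zero_mul]⟩
end

section
/- Let A be a unital Banach algebra containing a nontrivial idempotent P with (1−P)·A·P = {0}, and let δ: A → A be a continuous linear map such that ab + ba = P implies 2a·δ(b) + 2b·δ(a) = δ(P). Then for all a₁₂ ∈ P·A·(1−P) and a₂₂ ∈ (1−P)·A·(1−P): P·δ(a₁₂)·(1−P) = a₁₂·δ(1) and a₁₂·δ(a₂₂)·(1−P) = a₁₂·a₂₂·δ(1). -/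
private lemma auxX {A : Type*} [NormedRing A] [NormedAlgebra ℂ A] (P x q' : A) (δ : A →L[ℂ] A)
    (key : ∀ u v : A, u * v + v * u = 2 * P → u * δ v + v * δ u = δ P)
    (hP : P * P = P) (hPx : P * x = x) (hxP : x * P = 0) (hxx : x * x = 0)
    (hPq : P * q' = 0) (hqP : q' * P = 0) (hqq : q' * q' = q')
    (hqx : q' * x = 0) (hxq : x * q' = x) (hPq1 : P + q' = 1)
    (dP : δ P = 0) (Pdq : P * δ q' = 0) (dq1 : δ q' = δ 1) :
    δ x = x * δ 1 := by
  have hxdx : x * δ x = 0 := by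
    have H := key (P + x) (P - x) (by
      have e : (P+x)*(P-x) + (P-x)*(P+x) = (P*P + P*P) - (x*x + x*x) := by noncomm_ring
      rw [e, hP, hxx]; noncomm_ring)
    simp only [map_add, map_sub, dP] at H
    have e2 : (P+x)*((0:A) - δ x) + (P-x)*((0:A) + δ x) = -(x*δ x + x*δ x) := by noncomm_ring
    rw [e2] at H
    have h0 : x * δ x + x * δ x = 0 := neg_eq_zero.mp H
    have h1 : (2:ℂ) • (x * δ x) = 0 := by rw [two_smul]; exact h0
    rcases smul_eq_zero.mp h1 with h' | h'
    · exact absurd h' (by norm_num)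
    · exact h'
  have EqE : q' * δ x - P * δ x + x * δ q' = 0 := by
    have H := key (P + x) (P - x - x + q') (by
      have e : (P+x)*(P - x - x + q') + (P - x - x + q')*(P+x)
        = ((P*P + P*P) + (P*q' + q'*P) + (x*q' + q'*x) - P*x - x*P)
          - (x*x + x*x + x*x + x*x) := by noncomm_ring
      rw [e, hP, hPq, hqP, hxq, hqx, hPx, hxP, hxx]; noncomm_ring)
    simp only [map_add, map_sub, dP] at H
    have e2 : (P+x)*((0:A) - δ x - δ x + δ q') + (P - x - x + q')*((0:A) + δ x)
      = (q' * δ x - P * δ x + x * δ q') + (P * δ q')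
        - (x*δ x + x*δ x + x*δ x + x*δ x) := by noncomm_ring
    rw [e2, Pdq, hxdx] at H
    simp only [add_zero, zero_add, sub_zero] at H
    exact H
  have hqdx : q' * δ x = 0 := by
    have H2 := congrArg (fun z => q' * z) EqE
    simp only [mul_sub, mul_add, mul_zero] at H2
    rw [← mul_assoc, ← mul_assoc, ← mul_assoc, hqq, hqP, hqx, zero_mul, zero_mul,
      sub_zero, add_zero] at H2
    exact H2
  have hPdx : P * δ x = x * δ 1 := by
    have H3 := EqE
    rw [hqdx, dq1] at H3
    have H4 : x * δ 1 - P * δ x = 0 := by rw [← H3]; abel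
    exact (sub_eq_zero.mp H4).symm
  calc δ x = (P + q') * δ x := by rw [hPq1, one_mul]
    _ = P * δ x + q' * δ x := add_mul _ _ _
    _ = x * δ 1 := by rw [hPdx, hqdx, add_zero]

private lemma auxC {A : Type*} [NormedRing A] [NormedAlgebra ℂ A] (P x c : A) (δ : A →L[ℂ] A)
    (key : ∀ u v : A, u * v + v * u = 2 * P → u * δ v + v * δ u = δ P)
    (hP : P * P = P) (hPx : P * x = x) (hxP : x * P = 0) (hxx : x * x = 0)
    (hPc : P * c = 0) (hcP : c * P = 0) (hcx : c * x = 0)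
    (hPxc : P * (x*c) = x*c) (hxcP : x*c*P = 0) (hxxc : x*(x*c) = 0) (hxcx : x*c*x = 0)
    (dP : δ P = 0) (dx : δ x = x * δ 1) (dxc : δ (x*c) = x*c*δ 1) (Pdc : P * δ c = 0) :
    x * δ c = x * c * δ 1 := by
  have H := key (P + x) (P - x - x*c + c) (by
    have e : (P+x)*(P - x - x*c + c) + (P - x - x*c + c)*(P+x)
      = (P*P + P*P) + (P*c + c*P) - P*(x*c) + x*c - (x*x + x*x)
        - x*(x*c) - x*c*P - x*c*x + c*x := by noncomm_ring
    rw [e, hP, hPc, hcP, hPxc, hxx, hxxc, hxcP, hxcx, hcx]; noncomm_ring)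
  simp only [map_add, map_sub, dP, dx, dxc] at H
  have e2 : (P+x) * ((0:A) - x*δ 1 - x*c*δ 1 + δ c) + (P - x - x*c + c) * ((0:A) + x*δ 1)
    = x*δ c + P*δ c - P*(x*c*δ 1) - (x*(x*δ 1) + x*(x*δ 1))
      - x*(x*c*δ 1) - x*c*(x*δ 1) + c*(x*δ 1) := by noncomm_ring
  have r1 : P*(x*c*δ 1) = x*c*δ 1 := by
    have e : P*(x*c*δ 1) = (P*(x*c))*δ 1 := by noncomm_ring
    rw [e, hPxc]
  have r2 : x*(x*δ 1) = 0 := by rw [← mul_assoc, hxx, zero_mul]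
  have r3 : x*(x*c*δ 1) = 0 := by
    have e : x*(x*c*δ 1) = (x*(x*c))*δ 1 := by noncomm_ring
    rw [e, hxxc, zero_mul]
  have r4 : x*c*(x*δ 1) = 0 := by
    have e : x*c*(x*δ 1) = (x*c*x)*δ 1 := by noncomm_ring
    rw [e, hxcx, zero_mul]
  have r5 : c*(x*δ 1) = 0 := by rw [← mul_assoc, hcx, zero_mul]
  rw [e2, r1, r2, r3, r4, r5, Pdc] at H
  simp only [add_zero, zero_add, sub_zero] at H
  exact sub_eq_zero.mp H


/-- with `P` a nontrivial idempotent, `(1-P) A P = 0` and `δ` behaving like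
a Jordan left derivation at `P`-Jordan products, for all `a₁₂ ∈ P A (1-P)` and
`a₂₂ ∈ (1-P) A (1-P)` one has `P δ(a₁₂) (1-P) = a₁₂ δ(1)` and
`a₁₂ δ(a₂₂) (1-P) = a₁₂ a₂₂ δ(1)`. -/
theorem stmt9 {A : Type*} [NormedRing A] [NormedAlgebra ℂ A] [CompleteSpace A]
    (P : A) (hP : P * P = P) (hP0 : P ≠ 0) (hP1 : P ≠ 1)
    (hq : ∀ a : A, (1 - P) * a * P = 0)
    (δ : A →L[ℂ] A)
    (h : ∀ a b : A, a * b + b * a = P → 2 * (a * δ b) + 2 * (b * δ a) = δ P) :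
    ∀ a b : A,
      P * δ (P * a * (1 - P)) * (1 - P) = (P * a * (1 - P)) * δ 1 ∧
      (P * a * (1 - P)) * δ ((1 - P) * b * (1 - P)) * (1 - P) =
        (P * a * (1 - P)) * ((1 - P) * b * (1 - P)) * δ 1 := by
  intro a b
  set q : A := 1 - P with hq_def
  have hq' : ∀ z : A, q * z * P = 0 := by intro z; rw [hq_def]; exact hq z
  have hPq0 : P * q = 0 := by rw [hq_def, mul_sub, mul_one, hP, sub_self]
  have hqP0 : q * P = 0 := by have := hq' 1; rwa [mul_one] at this
  have hqq : q * q = q := by nth_rewrite 2 [hq_def]; rw [mul_sub, mul_one, hqP0, sub_zero]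
  have hPq1 : P + q = 1 := by rw [hq_def]; abel
  -- structure facts
  have F1 : ∀ y : A, P * (P*y*q) = P*y*q := by
    intro y
    have e : P * (P*y*q) = (P*P)*(y*q) := by noncomm_ring
    rw [e, hP]; noncomm_ring
  have F2 : ∀ y : A, (P*y*q) * P = 0 := by
    intro y
    have e : (P*y*q) * P = (P*y)*(q*P) := by noncomm_ring
    rw [e, hqP0, mul_zero]
  have F3 : ∀ y : A, q * (P*y*q) = 0 := by
    intro y
    have e : q * (P*y*q) = (q*P)*(y*q) := by noncomm_ring
    rw [e, hqP0, zero_mul]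
  have F4 : ∀ y : A, (P*y*q) * q = P*y*q := by
    intro y
    have e : (P*y*q) * q = (P*y)*(q*q) := by noncomm_ring
    rw [e, hqq]
  have F5 : ∀ y z : A, (P*y*q) * (P*z*q) = 0 := by
    intro y z
    have e : (P*y*q) * (P*z*q) = (P*y)*((q*P)*(z*q)) := by noncomm_ring
    rw [e, hqP0, zero_mul, mul_zero]
  have F6 : ∀ w : A, P * (q*w*q) = 0 := by
    intro w
    have e : P * (q*w*q) = (P*q)*(w*q) := by noncomm_ring
    rw [e, hPq0, zero_mul]
  have F7 : ∀ w : A, (q*w*q) * P = 0 := by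
    intro w
    have e : (q*w*q) * P = (q*w)*(q*P) := by noncomm_ring
    rw [e, hqP0, mul_zero]
  have F8 : ∀ w y : A, (q*w*q) * (P*y*q) = 0 := by
    intro w y
    have e : (q*w*q) * (P*y*q) = (q*w)*((q*P)*(y*q)) := by noncomm_ring
    rw [e, hqP0, zero_mul, mul_zero]
  -- the key consequence of h
  have h2 : ∀ z : A, (2:ℂ)⁻¹ • ((2:A) * z) = z := by
    intro z
    rw [two_mul, ← two_smul ℂ z, smul_smul]
    norm_num
  have key : ∀ u v : A, u * v + v * u = 2 * P → u * δ v + v * δ u = δ P := by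
    intro u v huv
    have H := h ((2:ℂ)⁻¹ • u) v ?_
    · rw [map_smul] at H
      simp only [smul_mul_assoc, mul_smul_comm] at H
      rw [h2, h2] at H
      exact H
    · rw [smul_mul_assoc, mul_smul_comm, ← smul_add, huv, h2]
  -- basic derivations
  have e1 : P * δ P + P * δ P = δ P := key P P (by rw [hP]; noncomm_ring)
  have hPd1 : P * δ 1 = 0 := by
    have e2 := key 1 P (by rw [one_mul, mul_one]; noncomm_ring)
    rw [one_mul] at e2
    exact add_left_cancel (e2.trans (add_zero (δ P)).symm)
  have eC : ∀ w : A, P * δ (q*w*q) + (q*w*q) * δ P = 0 := by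
    intro w
    have H := key P (P + q*w*q) (by
      have e : P*(P + q*w*q) + (P + q*w*q)*P = ((P*P + P*P) + P*(q*w*q)) + (q*w*q)*P := by
        noncomm_ring
      rw [e, hP, F6 w, F7 w]; noncomm_ring)
    rw [map_add, mul_add, add_mul] at H
    have comb : P * δ (q*w*q) + (q*w*q) * δ P
        = ((P*δ P + P*δ (q*w*q)) + (P*δ P + (q*w*q)*δ P)) - (P*δ P + P*δ P) := by abel
    rw [comb, H, e1, sub_self]
  have qdP : q * δ P = 0 := by
    have H := eC 1
    rw [mul_one, hqq] at H
    have H2 := congrArg (fun z => q * z) H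
    simp only [mul_add, mul_zero] at H2
    rw [← mul_assoc, ← mul_assoc, hqP0, hqq, zero_mul, zero_add] at H2
    exact H2
  have Pdq : P * δ q = 0 := by
    have H := eC 1
    rw [mul_one, hqq, qdP, add_zero] at H
    exact H
  have dq1' : δ (1:A) = δ P + δ q := by rw [← map_add, hPq1]
  have PdP : P * δ P = 0 := by
    have H := congrArg (fun z => P * z) dq1'
    simp only [mul_add] at H
    rw [hPd1, Pdq, add_zero] at H
    exact H.symm
  have dP : δ P = 0 := by
    have H := e1
    rw [PdP, add_zero] at H
    exact H.symm
  have dq1 : δ q = δ 1 := by rw [dq1', dP, zero_add]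
  have Pdc : ∀ w : A, P * δ (q*w*q) = 0 := by
    intro w
    have H := eC w
    rwa [dP, mul_zero, add_zero] at H
  -- the main lemma: δ of a (1,2)-element
  have LxI : ∀ y : A, δ (P*y*q) = (P*y*q) * δ 1 := fun y =>
    auxX P (P*y*q) q δ key hP (F1 y) (F2 y) (F5 y y) hPq0 hqP0 hqq (F3 y) (F4 y) hPq1
      dP Pdq dq1
  have key1 : ∀ z : A, z * P = 0 → z * q = z := by
    intro z hz
    rw [hq_def, mul_sub, mul_one, hz, sub_zero]
  have xd1P : ∀ y : A, (P*y*q) * δ 1 * P = 0 := by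
    intro y
    have e : (P*y*q) * δ 1 * P = (P*y) * (q * δ 1 * P) := by noncomm_ring
    rw [e, hq' (δ 1), mul_zero]
  constructor
  · -- first goal
    calc P * δ (P*a*q) * q = (P * ((P*a*q) * δ 1)) * q := by rw [LxI a]
      _ = ((P * (P*a*q)) * δ 1) * q := by rw [← mul_assoc]
      _ = ((P*a*q) * δ 1) * q := by rw [F1 a]
      _ = (P*a*q) * δ 1 := key1 _ (xd1P a)
  · -- second goal
    have hxc : (P*a*q)*(q*b*q) = P*(a*(q*b))*q := by
      have e : (P*a*q)*(q*b*q) = (P*a)*((q*q)*(b*q)) := by noncomm_ring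
      rw [e, hqq]; noncomm_ring
    have dxc : δ ((P*a*q)*(q*b*q)) = ((P*a*q)*(q*b*q)) * δ 1 := by
      rw [hxc]; exact LxI _
    have e6 : (P*a*q) * δ (q*b*q) = (P*a*q)*(q*b*q) * δ 1 := by
      refine auxC P (P*a*q) (q*b*q) δ key hP (F1 a) (F2 a) (F5 a a) (F6 b) (F7 b) (F8 b a)
        ?_ ?_ ?_ ?_ dP (LxI a) dxc (Pdc b)
      · rw [hxc]; exact F1 _
      · rw [hxc]; exact F2 _
      · rw [hxc]; exact F5 a _
      · rw [hxc]; exact F5 _ a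
    rw [e6]
    have hz : ((P*a*q)*(q*b*q)) * δ 1 * P = 0 := by
      rw [hxc]; exact xd1P _
    exact key1 _ hz
end

section
/- Let A be a unital Banach algebra containing a nontrivial idempotent P with (1−P)·A·P = {0}, and let δ: A → A be a continuous linear map satisfying: ab + ba = P implies 2a·δ(b) + 2b·δ(a) = δ(P), for all a, b ∈ A. Define α: A → A by α(a) = P·δ(P a P). Then α is a Jordan left derivation, i.e., α(a²) = 2a·α(a) for all a ∈ A. -/
set_option maxHeartbeats 1000000

lemma key_aux {A : Type*} [NormedRing A] [NormedAlgebra ℂ A] [CompleteSpace A]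
    (P : A) (hP : P * P = P)
    (hq : ∀ a : A, (1 - P) * a * P = 0)
    (δ : A →L[ℂ] A)
    (h : ∀ a b : A, a * b + b * a = P → 2 * (a * δ b) + 2 * (b * δ a) = δ P)
    (x : A) (hx1 : P * x = x) (hx2 : x * P = x) :
    P * δ (x * x) = 2 * (x * δ x) := by
  have half2 : ∀ y : A, (1/2 : ℂ) • (2 * y) = y := by
    intro y
    rw [two_mul, smul_add, ← add_smul]
    norm_num
  -- δ P = 0
  have hδP : δ P = 0 := by
    have e := h ((1/2 : ℂ) • P) P (by
      rw [smul_mul_assoc, mul_smul_comm, hP, ← add_smul]; norm_num)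
    simp only [map_smul, smul_mul_assoc, mul_smul_comm] at e
    rw [half2] at e
    have e2 := congrArg (fun y => P * y) e
    simp only [mul_add] at e2
    rw [← mul_assoc, hP] at e2
    have h0 : P * δ P = 0 := by
      have := add_eq_left.mp e2
      exact this
    rw [h0, add_zero] at e
    exact e.symm
  set D : A := P * δ (x * x) - (x * δ x + x * δ x) with hD_def
  set M : ℝ := ‖P‖ * (2 * ‖(1 : A)‖) * ‖P‖ with hM_def
  have hM0 : 0 ≤ M := by rw [hM_def]; positivity
  set K : ℝ := ‖P‖ * (‖δ‖ * (‖x‖ * (‖x‖ * (‖x‖ * M)))) +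
      ((‖x‖ * (‖x‖ * M)) * ‖δ x‖ + (‖x‖ * (‖x‖ * M)) * ‖δ x‖ +
        (‖x‖ * M) * ((‖x‖ * M) * ‖δ x‖)) with hK_def
  have hK0 : 0 ≤ K := by rw [hK_def]; positivity
  have mulb : ∀ (y z : A) (By Bz : ℝ), ‖y‖ ≤ By → ‖z‖ ≤ Bz → ‖y * z‖ ≤ By * Bz := by
    intro y z By Bz hy hz
    exact (norm_mul_le y z).trans (mul_le_mul hy hz (norm_nonneg z) ((norm_nonneg y).trans hy))
  have main : ∀ ε : ℝ, 0 < ε → ε * (‖x‖ + 1) ≤ 1/2 → ‖D‖ ≤ ε * K := by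
    intro ε hε hεc
    rw [hD_def]
    set c : ℂ := (ε : ℂ) with hc_def
    have hc0 : c ≠ 0 := by rw [hc_def]; exact_mod_cast hε.ne'
    have hnc : ‖c‖ = ε := by rw [hc_def, Complex.norm_real, Real.norm_eq_abs, abs_of_pos hε]
    have hεx : ε * ‖x‖ ≤ 1/2 := by nlinarith [norm_nonneg x]
    have hn : ‖-(c • x)‖ < 1 := by
      rw [norm_neg, norm_smul, hnc]
      nlinarith [norm_nonneg x]
    set w : Aˣ := Units.oneSub (-(c • x)) hn with hw_def
    have hwval : (w : A) = 1 + c • x := by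
      rw [hw_def]
      show 1 - (-(c • x)) = _
      rw [sub_neg_eq_add]
    set W : A := ((w⁻¹ : Aˣ) : A) with hW_def
    have hW1 : (1 + c • x) * W = 1 := by rw [← hwval, hW_def]; exact w.mul_inv
    have hW2 : W * (1 + c • x) = 1 := by rw [← hwval, hW_def]; exact w.inv_mul
    have hcomm : x * W = W * x := by
      have h1 : Commute x (w : A) := by
        unfold Commute SemiconjBy
        rw [hwval, mul_add, add_mul, mul_one, one_mul, mul_smul_comm, smul_mul_assoc]
      rw [hW_def]
      exact h1.units_inv_right
    have h1P : (1 + c • x) * (1 - P) = 1 - P := by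
      rw [add_mul, one_mul, smul_mul_assoc, mul_sub, mul_one, hx2, sub_self, smul_zero, add_zero]
    have hW1P : W * (1 - P) = 1 - P := by
      conv_lhs => rw [← h1P, ← mul_assoc, hW2, one_mul]
    set u : A := P + c • x with hu_def
    set v : A := P * W * P with hv_def
    have hPv : P * v = v := by rw [hv_def, ← mul_assoc, ← mul_assoc, hP]
    have hvP : v * P = v := by rw [hv_def, mul_assoc, hP]
    have huP : u * P = u := by rw [hu_def, add_mul, smul_mul_assoc, hP, hx2]
    have hPu : P * u = u := by rw [hu_def, mul_add, mul_smul_comm, hP, hx1]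
    have hu3 : u = (1 + c • x) - (1 - P) := by rw [hu_def]; abel
    have huv : u * v = P := by
      have h5 : u * W = 1 - (1 - P) * W := by
        rw [hu3, sub_mul, hW1]
      calc u * v = u * (P * W * P) := by rw [hv_def]
        _ = ((u * P) * W) * P := by rw [← mul_assoc, ← mul_assoc]
        _ = (u * W) * P := by rw [huP]
        _ = (1 - (1 - P) * W) * P := by rw [h5]
        _ = P - (1 - P) * W * P := by rw [sub_mul, one_mul]
        _ = P := by rw [hq W, sub_zero]
    have hvu : v * u = P := by
      have h6 : W * u = P := by
        rw [hu3, mul_sub, hW2, hW1P, sub_sub_cancel]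
      calc v * u = ((P * W) * P) * u := by rw [hv_def]
        _ = (P * W) * (P * u) := by rw [mul_assoc]
        _ = (P * W) * u := by rw [hPu]
        _ = P * (W * u) := by rw [mul_assoc]
        _ = P * P := by rw [h6]
        _ = P := hP
    have hδu : δ u = c • δ x := by rw [hu_def, map_add, map_smul, hδP, zero_add]
    have hcond : ((1/2 : ℂ) • v) * u + u * ((1/2 : ℂ) • v) = P := by
      rw [smul_mul_assoc, mul_smul_comm, hvu, huv]
      module
    have E1 := h ((1/2 : ℂ) • v) u hcond
    simp only [map_smul, smul_mul_assoc, mul_smul_comm] at E1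
    rw [half2, half2, hδP, hδu, mul_smul_comm] at E1
    -- E1 : c • (v * δ x) + u * δ v = 0
    have E2 : c • (v * (v * δ x)) + P * δ v = 0 := by
      have h3 := congrArg (fun y => v * y) E1
      simp only [mul_add, mul_zero, mul_smul_comm] at h3
      rw [show v * (u * δ v) = P * δ v from by rw [← mul_assoc, hvu]] at h3
      exact h3
    have F2 : v = P - c • (x * v) := by
      have h7 := huv
      rw [hu_def, add_mul, smul_mul_assoc, hPv] at h7
      exact eq_sub_of_add_eq h7
    have s1 : x * v = x - c • (x * (x * v)) := by
      conv_lhs => rw [F2]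
      rw [mul_sub, hx2, mul_smul_comm]
    have s2 : x * (x * v) = x * x - c • (x * (x * (x * v))) := by
      conv_lhs => rw [s1]
      rw [mul_sub, mul_smul_comm]
    have s3 : v = P - c • x + (c*c) • (x*x) - (c*c*c) • (x * (x * (x * v))) := by
      conv_lhs => rw [F2, s1, s2]
      module
    have s4 : δ v = (c*c) • δ (x*x) - c • δ x - (c*c*c) • δ (x * (x * (x * v))) := by
      conv_lhs => rw [s3]
      simp only [map_add, map_sub, map_smul]
      rw [hδP]
      module
    have s5 : P * δ v = (c*c) • (P * δ (x*x)) - c • (P * δ x)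
        - (c*c*c) • (P * δ (x * (x * (x * v)))) := by
      conv_lhs => rw [s4]
      simp only [mul_sub, mul_add, mul_smul_comm]
    have t2 : v * δ x = P * δ x - c • ((x * v) * δ x) := by
      conv_lhs => rw [F2]
      rw [sub_mul, smul_mul_assoc]
    have t3 : (x * v) * δ x = x * δ x - c • ((x * (x * v)) * δ x) := by
      conv_lhs => rw [s1]
      rw [sub_mul, smul_mul_assoc]
    have t1 : v * (v * δ x) = v * δ x - c • ((x * v) * (v * δ x)) := by
      have ht : (P - c • (x * v)) * (v * δ x) = v * δ x - c • ((x * v) * (v * δ x)) := by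
        rw [sub_mul, smul_mul_assoc, ← mul_assoc, hPv]
      rw [← F2] at ht
      exact ht
    have hxvPd : (x * v) * (P * δ x) = (x * v) * δ x := by
      rw [← mul_assoc, mul_assoc x v P, hvP]
    have t5 : (x * v) * (v * δ x) =
        x * δ x - c • ((x * (x * v)) * δ x) - c • ((x * v) * ((x * v) * δ x)) := by
      calc (x * v) * (v * δ x) = (x * v) * (P * δ x - c • ((x * v) * δ x)) := by rw [t2]
        _ = (x * v) * (P * δ x) - c • ((x * v) * ((x * v) * δ x)) := by
            rw [mul_sub, mul_smul_comm]
        _ = (x * v) * δ x - c • ((x * v) * ((x * v) * δ x)) := by rw [hxvPd]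
        _ = x * δ x - c • ((x * (x * v)) * δ x) - c • ((x * v) * ((x * v) * δ x)) := by
            rw [t3]
    have eA : v * (v * δ x) = P * δ x - c • (x * δ x) - c • (x * δ x)
        + (c*c) • ((x * (x * v)) * δ x) + (c*c) • ((x * (x * v)) * δ x)
        + (c*c) • ((x * v) * ((x * v) * δ x)) := by
      rw [t1, t5, t2, t3]
      module
    have final : (c*c) • (P * δ (x*x) - (x * δ x + x * δ x)) =
        (c*c*c) • (P * δ (x * (x * (x * v))) -
          ((x * (x * v)) * δ x + (x * (x * v)) * δ x + (x * v) * ((x * v) * δ x))) := by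
      have e1 : (c*c) • (P * δ (x*x) - (x * δ x + x * δ x)) -
          (c*c*c) • (P * δ (x * (x * (x * v))) -
            ((x * (x * v)) * δ x + (x * (x * v)) * δ x + (x * v) * ((x * v) * δ x))) =
          c • (v * (v * δ x)) + P * δ v := by
        rw [eA, s5]
        module
      rw [E2] at e1
      exact sub_eq_zero.mp e1
    -- bound v
    have hWexp : W = 1 - c • (x * W) := by
      have h8 := hW2
      rw [mul_add, mul_one, mul_smul_comm, ← hcomm] at h8
      exact (eq_sub_of_add_eq h8)
    have hWb : ‖W‖ ≤ 2 * ‖(1 : A)‖ := by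
      have h9 : ‖W‖ ≤ ‖(1 : A)‖ + ε * (‖x‖ * ‖W‖) := by
        calc ‖W‖ = ‖1 - c • (x * W)‖ := by rw [← hWexp]
          _ ≤ ‖(1 : A)‖ + ‖c • (x * W)‖ := norm_sub_le _ _
          _ ≤ ‖(1 : A)‖ + ε * (‖x‖ * ‖W‖) := by
              rw [norm_smul, hnc]
              exact add_le_add_right (mul_le_mul_of_nonneg_left (norm_mul_le x W) hε.le) _
      nlinarith [norm_nonneg W, norm_nonneg (1:A),
        mul_le_mul_of_nonneg_right hεx (norm_nonneg W)]
    have hvb : ‖v‖ ≤ M := by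
      rw [hv_def, hM_def]
      exact mulb _ _ _ _ (mulb _ _ _ _ le_rfl hWb) le_rfl
    have hxv : ‖x * v‖ ≤ ‖x‖ * M := mulb _ _ _ _ le_rfl hvb
    have hxxv : ‖x * (x * v)‖ ≤ ‖x‖ * (‖x‖ * M) := mulb _ _ _ _ le_rfl hxv
    have hxxxv : ‖x * (x * (x * v))‖ ≤ ‖x‖ * (‖x‖ * (‖x‖ * M)) := mulb _ _ _ _ le_rfl hxxv
    have hPd : ‖P * δ (x * (x * (x * v)))‖ ≤ ‖P‖ * (‖δ‖ * (‖x‖ * (‖x‖ * (‖x‖ * M)))) :=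
      mulb _ _ _ _ le_rfl ((δ.le_opNorm _).trans
        (mul_le_mul_of_nonneg_left hxxxv (norm_nonneg δ)))
    have hT1 : ‖(x * (x * v)) * δ x‖ ≤ (‖x‖ * (‖x‖ * M)) * ‖δ x‖ := mulb _ _ _ _ hxxv le_rfl
    have hQ : ‖(x * v) * ((x * v) * δ x)‖ ≤ (‖x‖ * M) * ((‖x‖ * M) * ‖δ x‖) :=
      mulb _ _ _ _ hxv (mulb _ _ _ _ hxv le_rfl)
    have hZb : ‖P * δ (x * (x * (x * v))) -
        ((x * (x * v)) * δ x + (x * (x * v)) * δ x + (x * v) * ((x * v) * δ x))‖ ≤ K := by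
      rw [hK_def]
      refine (norm_sub_le _ _).trans ?_
      refine add_le_add hPd ?_
      calc ‖(x * (x * v)) * δ x + (x * (x * v)) * δ x + (x * v) * ((x * v) * δ x)‖
          ≤ ‖(x * (x * v)) * δ x + (x * (x * v)) * δ x‖ + ‖(x * v) * ((x * v) * δ x)‖ :=
            norm_add_le _ _
        _ ≤ (‖(x * (x * v)) * δ x‖ + ‖(x * (x * v)) * δ x‖) + ‖(x * v) * ((x * v) * δ x)‖ :=
            add_le_add_left (norm_add_le _ _) _
        _ ≤ (‖x‖ * (‖x‖ * M)) * ‖δ x‖ + (‖x‖ * (‖x‖ * M)) * ‖δ x‖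
            + (‖x‖ * M) * ((‖x‖ * M) * ‖δ x‖) :=
            add_le_add (add_le_add hT1 hT1) hQ
    have hDc : P * δ (x*x) - (x * δ x + x * δ x) =
        c • (P * δ (x * (x * (x * v))) -
          ((x * (x * v)) * δ x + (x * (x * v)) * δ x + (x * v) * ((x * v) * δ x))) := by
      have h10 := congrArg (fun y => (c⁻¹ * c⁻¹) • y) final
      simp only [smul_smul] at h10
      rw [show c⁻¹ * c⁻¹ * (c * c) = 1 from by field_simp,
        show c⁻¹ * c⁻¹ * (c * c * c) = c from by field_simp, one_smul] at h10
      exact h10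
    rw [hDc, norm_smul, hnc]
    exact mul_le_mul_of_nonneg_left hZb hε.le
  have hDzero : D = 0 := by
    by_contra hne
    have hpos : 0 < ‖D‖ := norm_pos_iff.mpr hne
    set ε : ℝ := min (1/(2*(‖x‖+1))) (‖D‖/(2*(K+1))) with hε_def
    have hx1' : (0:ℝ) < ‖x‖ + 1 := by positivity
    have hKpos : (0:ℝ) < 2 * (K + 1) := by linarith
    have hε1 : 0 < ε := lt_min (by positivity) (div_pos hpos hKpos)
    have hε2 : ε * (‖x‖ + 1) ≤ 1/2 := by
      have h11 : ε ≤ 1/(2*(‖x‖+1)) := min_le_left _ _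
      calc ε * (‖x‖+1) ≤ (1/(2*(‖x‖+1))) * (‖x‖+1) :=
            mul_le_mul_of_nonneg_right h11 hx1'.le
        _ = 1/2 := by field_simp
    have hb := main ε hε1 hε2
    have h12 : ε ≤ ‖D‖/(2*(K+1)) := min_le_right _ _
    have h13 : ε * K ≤ (‖D‖/(2*(K+1))) * K := mul_le_mul_of_nonneg_right h12 hK0
    have h14 : (‖D‖/(2*(K+1))) * K < ‖D‖ := by
      rw [div_mul_eq_mul_div, div_lt_iff₀ hKpos]
      nlinarith [mul_nonneg hpos.le hK0, hpos]
    exact lt_irrefl _ ((hb.trans h13).trans_lt h14)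
  have hfinal : P * δ (x * x) - (x * δ x + x * δ x) = 0 := by
    rw [← hD_def]; exact hDzero
  rw [two_mul]
  exact sub_eq_zero.mp hfinal

/-- with `P` a nontrivial idempotent, `(1-P) A P = 0` and `δ` behaving like
a Jordan left derivation at `P`-Jordan products, the map `α(a) = P δ(P a P)` is a Jordan
left derivation: `α(a²) = 2 a α(a)`. -/
theorem stmt10 {A : Type*} [NormedRing A] [NormedAlgebra ℂ A] [CompleteSpace A]
    (P : A) (hP : P * P = P) (hP0 : P ≠ 0) (hP1 : P ≠ 1)
    (hq : ∀ a : A, (1 - P) * a * P = 0)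
    (δ : A →L[ℂ] A)
    (h : ∀ a b : A, a * b + b * a = P → 2 * (a * δ b) + 2 * (b * δ a) = δ P) :
    ∀ a : A, P * δ (P * (a * a) * P) = 2 * (a * (P * δ (P * a * P))) := by
  intro a
  have hcor : ∀ b : A, P * b * P = b * P := by
    intro b
    have h0 := hq b
    rw [sub_mul, sub_mul, one_mul] at h0
    exact (sub_eq_zero.mp h0).symm
  have hx1 : P * (a * P) = a * P := by rw [← mul_assoc, hcor]
  have hx2 : (a * P) * P = a * P := by rw [mul_assoc, hP]
  have key := key_aux P hP hq δ h (a * P) hx1 hx2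
  have harg1 : P * (a * a) * P = (a * P) * (a * P) := by
    rw [hcor (a * a), mul_assoc a P (a * P), hx1, ← mul_assoc]
  have harg2 : P * a * P = a * P := hcor a
  rw [harg1, harg2, key, mul_assoc a P (δ (a * P))]
end

section
/- Let A be a unital Banach algebra with a nontrivial idempotent P satisfying (1−P)·A·P = {0}. Write q = 1−P. Suppose δ(a) = α(a) + β(a) + P a q·δ(1) for all a ∈ A, where: α is a Jordan left derivation with α(a) = P·α(PaP) for all a; β satisfies β(a) = q·β(qaq)·q for all a, and (qaq)(qbq) + (qbq)(qaq) = 0 implies q·a·β(b) + q·b·β(a) = 0, and P a q·β(b) = P a q b q·δ(1) for all a, b. Then for all a, b ∈ A with ab + ba = P, one has 2a·δ(b) + 2b·δ(a) = δ(P). -/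
/-- 'if' direction of the structure theorem: if
`δ(a) = α(a) + β(a) + P a (1-P) δ(1)` with `α` a Jordan left derivation supported on
the `P`-corner and `β` satisfying the stated conditions, then `δ` behaves like a Jordan
left derivation at `P`-Jordan products. -/
theorem stmt11 {A : Type*} [NormedRing A] [NormedAlgebra ℂ A] [CompleteSpace A]
    (P : A) (hP : P * P = P) (hP0 : P ≠ 0) (hP1 : P ≠ 1)
    (hq : ∀ a : A, (1 - P) * a * P = 0)
    (δ α β : A →L[ℂ] A)
    (hαJ : ∀ a : A, α (a * a) = 2 * (a * α a))
    (hαP : ∀ a : A, α a = P * α (P * a * P))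
    (hβP : ∀ a : A, β a = (1 - P) * β ((1 - P) * a * (1 - P)) * (1 - P))
    (hβ0 : ∀ a b : A,
      ((1 - P) * a * (1 - P)) * ((1 - P) * b * (1 - P)) +
        ((1 - P) * b * (1 - P)) * ((1 - P) * a * (1 - P)) = 0 →
      (1 - P) * a * β b + (1 - P) * b * β a = 0)
    (hβδ : ∀ a b : A, P * a * (1 - P) * β b = P * a * (1 - P) * b * (1 - P) * δ 1)
    (hδ : ∀ a : A, δ a = α a + β a + P * a * (1 - P) * δ 1) :
    ∀ a b : A, a * b + b * a = P → 2 * (a * δ b) + 2 * (b * δ a) = δ P := by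
  intro a b hab
  have hPq : P * (1 - P) = 0 := by rw [mul_sub, mul_one, hP, sub_self]
  have hqP : (1 - P) * P = 0 := by rw [sub_mul, one_mul, hP, sub_self]
  have hqq : (1 - P) * (1 - P) = 1 - P := by rw [mul_sub, mul_one, hqP, sub_zero]
  have hqq' : ∀ y : A, (1 - P) * ((1 - P) * y) = (1 - P) * y := by
    intro y; rw [← mul_assoc, hqq]
  have hPP : ∀ y : A, P * (P * y) = P * y := by
    intro y; rw [← mul_assoc, hP]
  have haP : ∀ x : A, x * P = P * x * P := by
    intro x
    have h := hq x
    rw [sub_mul, one_mul, sub_mul, sub_eq_zero] at h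
    exact h
  -- polarization of the Jordan left derivation property
  have polar : ∀ x y : A, α (x * y + y * x) = 2 * (x * α y) + 2 * (y * α x) := by
    intro x y
    have h1 := hαJ (x + y)
    have h2 := hαJ x
    have h3 := hαJ y
    have e : (x + y) * (x + y) = x * x + (x * y + y * x) + y * y := by noncomm_ring
    rw [e] at h1
    simp only [map_add] at h1
    rw [h2, h3] at h1
    rw [map_add]
    linear_combination (norm := noncomm_ring) h1
  have hαPa : ∀ x : A, α (P * x * P) = α x := by
    intro x
    have h := hαP (P * x * P)
    have e : P * (P * x * P) * P = P * x * P := by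
      simp only [mul_assoc, hPP, hP]
    rw [e] at h
    exact h.trans (hαP x).symm
  have hPα : ∀ y : A, P * α y = α y := by
    intro y
    have h := hαP y
    rw [hαPa] at h
    exact h.symm
  have hcorner : ∀ x y : A, (P * x * P) * α y = x * α y := by
    intro x y
    rw [← haP x, mul_assoc, hPα]
  -- the P-corner Jordan relation
  have e1 : (P * a * P) * (P * b * P) + (P * b * P) * (P * a * P) = P := by
    linear_combination (norm := noncomm_ring)
      P * a * hP * (b * P) + P * b * hP * (a * P) - P * a * (hq b) - P * b * (hq a) +
        P * hab * P + hP * P + hP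
  have e2 := polar (P * a * P) (P * b * P)
  rw [e1, hαPa b, hαPa a] at e2
  simp only [hcorner] at e2
  -- e2 : α P = 2 * (a * α b) + 2 * (b * α a)
  have hδP : δ P = α P := by
    rw [hδ P, hβP P]
    simp only [hqP, hP, hPq, zero_mul, map_zero, mul_zero, add_zero]
  -- the (1-P)-corner anticommutation relation
  have h0 : ((1 - P) * a * (1 - P)) * ((1 - P) * b * (1 - P)) +
      ((1 - P) * b * (1 - P)) * ((1 - P) * a * (1 - P)) = 0 := by
    linear_combination (norm := noncomm_ring)
      (1 - P) * hab * (1 - P) + (hq 1) * (1 - P) - (hq a) * (b * (1 - P)) -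
        (hq b) * (a * (1 - P)) + (1 - P) * a * hP * (b * (1 - P)) +
        (1 - P) * b * hP * (a * (1 - P))
  have F2 := hβ0 a b h0
  have hPaβ : ∀ x y : A, P * x * β y = P * x * (1 - P) * β y := by
    intro x y
    rw [hβP y]
    simp only [mul_assoc, hqq']
  have G1 : P * a * β b = P * a * (1 - P) * b * (1 - P) * δ 1 := (hPaβ a b).trans (hβδ a b)
  have G2 : P * b * β a = P * b * (1 - P) * a * (1 - P) * δ 1 := (hPaβ b a).trans (hβδ b a)
  have G3 : P * a * (1 - P) * b * (1 - P) * δ 1 + P * b * (1 - P) * a * (1 - P) * δ 1 +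
      a * (P * b * (1 - P) * δ 1) + b * (P * a * (1 - P) * δ 1) = 0 := by
    linear_combination (norm := noncomm_ring)
      (hq a) * (b * ((1 - P) * δ 1)) + (hq b) * (a * ((1 - P) * δ 1)) +
        P * hab * ((1 - P) * δ 1) + hP * ((1 - P) * δ 1) + hPq * (δ 1)
  rw [hδ a, hδ b]
  linear_combination (norm := noncomm_ring)
    -hδP - e2 + 2 * F2 + 2 * G1 + 2 * G2 + 2 * G3
end
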